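/- Let σ and Δ₊ be commuting positive semidefinite Hermitian d×d complex matrices with tr Δ₊ = 1, and suppose σ ≥ x·I for some real x > 0 (i.e. σ − x·I is positive semidefinite). Then for every t ≥ 0, the matrix σ + tΔ₊ is positive definite and tr( Δ₊³ · (σ + tΔ₊)⁻² ) ≤ (x + t)⁻². -/

import Mathlib

/-!
Write `M = σ + tΔ₊` and `c = x + t`. A positive semidefinite matrix of trace one lies below `I`,
so `cΔ₊ ≤ xI + tΔ₊ ≤ M`. Since `Δ₊`, `M + cΔ₊`, `M - cΔ₊` and `M⁻²` are pairwise commuting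
positive semidefinite matrices, `Δ₊ - c²Δ₊³M⁻² = Δ₊(M + cΔ₊)(M - cΔ₊)M⁻²` is positive
semidefinite, and taking traces gives `c² tr(Δ₊³M⁻²) ≤ tr Δ₊ = 1`.
-/

open Matrix MeasureTheory
open scoped ComplexOrder

noncomputable section

/-- Logarithm of a matrix: for a Hermitian matrix, apply the real logarithm to the
eigenvalues via the spectral decomposition (functional calculus); junk value `0`
for non-Hermitian matrices. -/
def matLog {d : ℕ} (A : Matrix (Fin d) (Fin d) ℂ) : Matrix (Fin d) (Fin d) ℂ :=
  if hA : A.IsHermitian then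
    (hA.eigenvectorUnitary : Matrix (Fin d) (Fin d) ℂ) *
      Matrix.diagonal (fun i => (Real.log (hA.eigenvalues i) : ℂ)) *
      (star hA.eigenvectorUnitary : Matrix (Fin d) (Fin d) ℂ)
  else 0

/-- The absolute value `|A| = √(AᴴA)` of a matrix. -/
def matAbs {d : ℕ} (A : Matrix (Fin d) (Fin d) ℂ) : Matrix (Fin d) (Fin d) ℂ :=
  ((Matrix.posSemidef_conjTranspose_mul_self A).1.eigenvectorUnitary : Matrix (Fin d) (Fin d) ℂ) *
    Matrix.diagonal ((↑) ∘ Real.sqrt ∘ (Matrix.posSemidef_conjTranspose_mul_self A).1.eigenvalues) *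
    (star (Matrix.posSemidef_conjTranspose_mul_self A).1.eigenvectorUnitary : Matrix (Fin d) (Fin d) ℂ)

/-- The trace norm `‖A‖₁ = tr √(AᴴA)`. -/
def traceNorm {d : ℕ} (A : Matrix (Fin d) (Fin d) ℂ) : ℝ :=
  ((matAbs A).trace).re

/-- The positive part `A₊ = (A + |A|)/2` of a (Hermitian) matrix. -/
def matPos {d : ℕ} (A : Matrix (Fin d) (Fin d) ℂ) : Matrix (Fin d) (Fin d) ℂ :=
  (2⁻¹ : ℂ) • (A + matAbs A)

/-- The negative part `A₋ = (|A| − A)/2` of a (Hermitian) matrix. -/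
def matNeg {d : ℕ} (A : Matrix (Fin d) (Fin d) ℂ) : Matrix (Fin d) (Fin d) ℂ :=
  (2⁻¹ : ℂ) • (matAbs A - A)

/-- The quantum relative entropy `S(ρ‖σ) = tr ρ (log ρ − log σ)`. -/
def relEnt {d : ℕ} (ρ σ : Matrix (Fin d) (Fin d) ℂ) : ℝ :=
  ((ρ * (matLog ρ - matLog σ)).trace).re

/-- Smallest eigenvalue of a Hermitian matrix. -/
def lamMin {d : ℕ} {A : Matrix (Fin d) (Fin d) ℂ} (hA : A.IsHermitian) : ℝ :=
  ⨅ i, hA.eigenvalues i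

/-- The asymmetry function of the binary Kullback–Leibler divergence:
`a(p,t) = (2p+t)·log(1+t/p) + (2(1−p)−t)·log(1−t/(1−p))`. -/
def asym (p t : ℝ) : ℝ :=
  (2 * p + t) * Real.log (1 + t / p) + (2 * (1 - p) - t) * Real.log (1 - t / (1 - p))

open scoped MatrixOrder

section

variable {n 𝕜 : Type*} [Fintype n] [DecidableEq n] [RCLike 𝕜]

theorem Matrix.PosSemidef.le_re_trace_smul_one {A : Matrix n n 𝕜} (hA : A.PosSemidef) :
    A ≤ RCLike.re A.trace • (1 : Matrix n n 𝕜) := by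
  rw [← Algebra.algebraMap_eq_smul_one]
  refine le_algebraMap_of_spectrum_le (fun r hr => ?_) hA.isHermitian.isSelfAdjoint
  obtain ⟨i, rfl⟩ := hA.isHermitian.spectrum_real_eq_range_eigenvalues ▸ hr
  rw [hA.isHermitian.trace_eq_sum_eigenvalues, ← RCLike.ofReal_sum, RCLike.ofReal_re]
  exact Finset.single_le_sum (fun j _ => hA.eigenvalues_nonneg j) (Finset.mem_univ i)

theorem Commute.matrix_nonsing_inv_left {R : Type*} [CommRing R] {A B : Matrix n n R}
    (h : Commute A B) : Commute A⁻¹ B := by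
  by_cases hA : IsUnit A
  · have := h.units_inv_left (u := hA.unit)
    rwa [Matrix.coe_units_inv, hA.unit_spec] at this
  · rw [Matrix.nonsing_inv_eq_ringInverse, Ring.inverse_non_unit _ hA]
    exact Commute.zero_left B

theorem Matrix.sq_smul_mul_inv_sq_le {D M : Matrix n n 𝕜} (hD : 0 ≤ D) (hM : IsUnit M)
    (hDM : Commute D M) {c : ℝ} (hc : 0 ≤ c) (hcDM : c • D ≤ M) :
    c ^ 2 • (D ^ 3 * M⁻¹ ^ 2) ≤ D := by
  have hcD : 0 ≤ c • D := smul_nonneg hc hD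
  have hMpos : 0 ≤ M := hcD.trans hcDM
  have hsum : 0 ≤ M + c • D := add_nonneg hMpos hcD
  have hdiff : 0 ≤ M - c • D := sub_nonneg.mpr hcDM
  have hMinv : 0 ≤ M⁻¹ ^ 2 :=
    nonneg_iff_posSemidef.mpr ((nonneg_iff_posSemidef.mp hMpos).inv.pow 2)
  have hcD_M : Commute (c • D) M := hDM.smul_left c
  have hMinvD : Commute M⁻¹ D := hDM.symm.matrix_nonsing_inv_left
  have hMM : M ^ 2 * M⁻¹ ^ 2 = 1 := by
    rw [Matrix.inv_pow', Matrix.mul_nonsing_inv _ ((Matrix.isUnit_iff_isUnit_det _).mp (hM.pow 2))]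
  have hfactor : D - c ^ 2 • (D ^ 3 * M⁻¹ ^ 2) = D * (M + c • D) * (M - c • D) * M⁻¹ ^ 2 := by
    rw [mul_assoc D, ← hcD_M.symm.sq_sub_sq, smul_pow, mul_sub, sub_mul, mul_assoc, hMM, mul_one,
      mul_smul_comm, ← pow_succ', smul_mul_assoc]
  have hnonneg : 0 ≤ D * (M + c • D) * (M - c • D) * M⁻¹ ^ 2 := by
    have hDsum : Commute D (M + c • D) := hDM.add_right ((Commute.refl D).smul_right c)
    have hDdiff : Commute D (M - c • D) := hDM.sub_right ((Commute.refl D).smul_right c)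
    have hsumdiff : Commute (M + c • D) (M - c • D) :=
      ((Commute.refl M).sub_right hcD_M.symm).add_left (hcD_M.sub_right (Commute.refl _))
    have hMinvM : Commute M⁻¹ M := (Commute.refl M).matrix_nonsing_inv_left
    have hMinvsum : Commute M⁻¹ (M + c • D) := hMinvM.add_right (hMinvD.smul_right c)
    have hMinvdiff : Commute M⁻¹ (M - c • D) := hMinvM.sub_right (hMinvD.smul_right c)
    refine Commute.mul_nonneg (Commute.mul_nonneg (Commute.mul_nonneg hD hsum hDsum) hdiff
      (hDdiff.mul_left hsumdiff)) hMinv ?_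
    exact ((hMinvD.symm.mul_left hMinvsum.symm).mul_left hMinvdiff.symm).pow_right 2
  exact sub_nonneg.mp (hfactor ▸ hnonneg)

end

theorem trace_posPart_cube_le_general {d : ℕ} (σ Δp : Matrix (Fin d) (Fin d) ℂ)
    (hΔp : Δp.PosSemidef) (hcomm : Commute σ Δp)
    (htr : Δp.trace = 1) (x : ℝ) (hx : 0 < x)
    (hxσ : (σ - x • (1 : Matrix (Fin d) (Fin d) ℂ)).PosSemidef)
    (t : ℝ) (ht : 0 ≤ t) :
    (σ + t • Δp).PosDef ∧
      ((Δp ^ 3 * ((σ + t • Δp)⁻¹) ^ 2).trace).re ≤ ((x + t) ^ 2)⁻¹ := by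
  have hΔ1 : Δp ≤ 1 := by simpa [htr] using hΔp.le_re_trace_smul_one
  have hpd : (σ + t • Δp).PosDef := by
    rw [show σ + t • Δp = (σ - x • 1 + t • Δp) + x • 1 by abel]
    exact PosDef.posSemidef_add (hxσ.add (hΔp.smul ht)) (PosDef.one.smul hx)
  have hle : (x + t) • Δp ≤ σ + t • Δp := by
    rw [add_smul]
    exact add_le_add_left ((smul_le_smul_of_nonneg_left hΔ1 hx.le).trans
      (sub_nonneg.mp (nonneg_iff_posSemidef.mpr hxσ))) _
  have hcube := sq_smul_mul_inv_sq_le (nonneg_iff_posSemidef.mpr hΔp) hpd.isUnit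
    (hcomm.symm.add_right ((Commute.refl Δp).smul_right t)) (by positivity) hle
  have htrace := (nonneg_iff_posSemidef.mp (sub_nonneg.mpr hcube)).trace_nonneg
  rw [trace_sub, trace_smul, htr, Complex.nonneg_iff] at htrace
  refine ⟨hpd, ?_⟩
  rw [inv_eq_one_div ((x + t) ^ 2), le_div_iff₀ (by positivity)]
  have hre := htrace.1
  simp only [Complex.sub_re, Complex.one_re, Complex.real_smul, Complex.re_ofReal_mul] at hre
  linarith

/-- For commuting positive semidefinite `σ, Δ₊` with `tr Δ₊ = 1` and `σ ≥ xI`, `x > 0`: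
for every `t ≥ 0` the matrix `σ + tΔ₊` is positive definite and
`tr(Δ₊³(σ+tΔ₊)⁻²) ≤ (x+t)⁻²`. -/
theorem trace_posPart_cube_le {d : ℕ} (σ Δp : Matrix (Fin d) (Fin d) ℂ)
    (hσ : σ.PosSemidef) (hΔp : Δp.PosSemidef) (hcomm : Commute σ Δp)
    (htr : Δp.trace = 1) (x : ℝ) (hx : 0 < x)
    (hxσ : (σ - x • (1 : Matrix (Fin d) (Fin d) ℂ)).PosSemidef)
    (t : ℝ) (ht : 0 ≤ t) :
    (σ + t • Δp).PosDef ∧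
      ((Δp ^ 3 * ((σ + t • Δp)⁻¹) ^ 2).trace).re ≤ ((x + t) ^ 2)⁻¹ :=
  trace_posPart_cube_le_general σ Δp hΔp hcomm htr x hx hxσ t ht
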